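/- arXiv:math/0611278 — 5 statements merged into one kernel-verified Lean document; each statement's English description precedes it below -/
import Mathlib

section
/- Let n > k ≥ 1 be integers, p ∈ (0,1) and a ∈ ℝ. On the domain D = {λ ∈ ℝ : λ < k and 1 − (λ/k)a > 0}, define g(λ) = a/(1 − (λ/k)a) + log((n − λ)p/(k − λ)). Then g is differentiable on D with g′(λ) = a²/(k(1 − (λ/k)a)²) + (n − k)/((n − λ)(k − λ)) > 0, so g is strictly increasing on D, and there exists exactly one λ ∈ D with g(λ) = 0. -/
/-!
The function `g` is the sum of `a / (1 - λa/k)`, whose derivative `a² / (k (1 - λa/k)²)` is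
nonnegative, and `log p + log ((n - λ)/(k - λ))`, which is strictly increasing for `λ < k < n`;
so `g` is strictly increasing on the interval `D` and has at most one zero there. A zero exists
by the intermediate value theorem. At the left end of `D`, `g` tends to `log p < 0`
(`a ≥ 0`, `λ → -∞`) or to `-∞` (`a < 0`, `λ → k/a⁺`). At the right end it tends to `+∞`,
through the logarithm (`a < 1`, `λ → k⁻`) or through the first term (`a ≥ 1`, `λ → k/a⁻`),
the logarithm being bounded below by `log p`.
-/

open Filter Real Set Topology

noncomputable section

theorem StrictMonoOn.existsUnique_eq_of_le_of_le {α δ : Type*} [ConditionallyCompleteLinearOrder α]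
    [TopologicalSpace α] [OrderTopology α] [DenselyOrdered α] [LinearOrder δ] [TopologicalSpace δ]
    [OrderClosedTopology δ] {f : α → δ} {s : Set α} {x y : α} {c : δ}
    (hf : StrictMonoOn f s) (hs : s.OrdConnected) (hcont : ContinuousOn f s)
    (hx : x ∈ s) (hy : y ∈ s) (hxc : f x ≤ c) (hcy : c ≤ f y) : ∃! z, z ∈ s ∧ f z = c := by
  obtain ⟨z, hz, hzc⟩ := intermediate_value_uIcc (hcont.mono (hs.uIcc_subset hx hy))
    (mem_uIcc.2 (Or.inl ⟨hxc, hcy⟩))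
  exact ⟨z, ⟨hs.uIcc_subset hx hy hz, hzc⟩,
    fun w ⟨hw, hwc⟩ => hf.injOn hw (hs.uIcc_subset hx hy hz) (hwc.trans hzc.symm)⟩

namespace LagrangeMultiplier

def domain (k a : ℝ) : Set ℝ := {l | l < k ∧ 0 < 1 - l / k * a}

def g (n k p a l : ℝ) : ℝ := a / (1 - l / k * a) + log ((n - l) * p / (k - l))

def g' (n k a l : ℝ) : ℝ := a ^ 2 / (k * (1 - l / k * a) ^ 2) + (n - k) / ((n - l) * (k - l))

variable {n k p a l : ℝ}

theorem mem_domain_iff (hk : 0 < k) : l ∈ domain k a ↔ l < k ∧ l * a < k := by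
  rw [domain, mem_ofPred_eq, sub_pos, div_mul_eq_mul_div, div_lt_one hk]

theorem isOpen_domain : IsOpen (domain k a) :=
  (isOpen_lt continuous_id continuous_const).inter
    (isOpen_lt continuous_const (by fun_prop : Continuous fun l : ℝ => 1 - l / k * a))

theorem convex_domain : Convex ℝ (domain k a) := by
  rintro x ⟨hxk, hxa⟩ y ⟨hyk, hya⟩ s t hs ht hst
  refine ⟨convex_Iio k hxk hyk hs ht hst, ?_⟩
  have key := convex_Ioi (0 : ℝ) hxa hya hs ht hst
  simp only [mem_Ioi, smul_eq_mul] at key ⊢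
  linear_combination key + hst

theorem hasDerivAt_g (hk : k ≠ 0) (hkn : k ≤ n) (hp : p ≠ 0) (hl : l ∈ domain k a) :
    HasDerivAt (g n k p a) (g' n k a l) l := by
  obtain ⟨hlk, hu⟩ := hl
  have hkl : k - l ≠ 0 := (sub_pos.2 hlk).ne'
  have hnl : n - l ≠ 0 := (sub_pos.2 (hlk.trans_le hkn)).ne'
  have hden : HasDerivAt (fun x => 1 - x / k * a) (-(1 / k * a)) l := by
    simpa using (((hasDerivAt_id' l).div_const k).mul_const a).const_sub 1
  have hratio := (((hasDerivAt_id' l).const_sub n).mul_const p).fun_div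
    ((hasDerivAt_id' l).const_sub k) hkl
  refine (((hasDerivAt_const l a).fun_div hden hu.ne').add
    (hratio.log (by simp [hnl, hp, hkl]))).congr_deriv ?_
  unfold g'
  field_simp
  ring

theorem g'_pos (hk : 0 ≤ k) (hkn : k < n) (hl : l ∈ domain k a) : 0 < g' n k a l := by
  obtain ⟨hlk, -⟩ := hl
  have : 0 < (n - k) / ((n - l) * (k - l)) :=
    div_pos (by linarith) (mul_pos (by linarith) (by linarith))
  unfold g'
  positivity

theorem continuousOn_g (hk : 0 < k) (hkn : k ≤ n) (hp : p ≠ 0) :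
    ContinuousOn (g n k p a) (domain k a) :=
  fun _ hl => (hasDerivAt_g hk.ne' hkn hp hl).continuousAt.continuousWithinAt

theorem strictMonoOn_g (hk : 0 < k) (hkn : k < n) (hp : p ≠ 0) :
    StrictMonoOn (g n k p a) (domain k a) := by
  refine strictMonoOn_of_deriv_pos convex_domain (continuousOn_g hk hkn.le hp) fun l hl => ?_
  rw [isOpen_domain.interior_eq] at hl
  rw [(hasDerivAt_g hk.ne' hkn.le hp hl).deriv]
  exact g'_pos hk.le hkn hl

theorem eventually_mem_domain_atBot (hk : 0 < k) (ha : 0 ≤ a) : ∀ᶠ l in atBot, l ∈ domain k a := by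
  filter_upwards [eventually_le_atBot 0] with l hl
  exact (mem_domain_iff hk).2 ⟨hl.trans_lt hk, (mul_nonpos_of_nonpos_of_nonneg hl ha).trans_lt hk⟩

theorem eventually_mem_domain_nhdsGT_div (hk : 0 < k) (ha : a < 0) :
    ∀ᶠ l in 𝓝[>] (k / a), l ∈ domain k a := by
  filter_upwards [Ioo_mem_nhdsGT ((div_neg_of_pos_of_neg hk ha).trans hk)] with l hl
  exact (mem_domain_iff hk).2 ⟨hl.2, (div_lt_iff_of_neg ha).1 hl.1⟩

theorem eventually_mem_domain_nhdsLT_self (hk : 0 < k) (ha : a < 1) :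
    ∀ᶠ l in 𝓝[<] k, l ∈ domain k a := by
  have hla : ∀ᶠ l in 𝓝 k, l * a < k :=
    (continuous_id.mul continuous_const).continuousAt.eventually_lt continuousAt_const
      (by simpa using mul_lt_mul_of_pos_left ha hk)
  filter_upwards [self_mem_nhdsWithin, nhdsWithin_le_nhds hla] with l hlk hla
  exact (mem_domain_iff hk).2 ⟨hlk, hla⟩

theorem eventually_mem_domain_nhdsLT_div (hk : 0 < k) (ha : 1 ≤ a) :
    ∀ᶠ l in 𝓝[<] (k / a), l ∈ domain k a := by
  filter_upwards [self_mem_nhdsWithin] with l hl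
  exact (mem_domain_iff hk).2
    ⟨hl.trans_le (div_le_self hk.le ha), (lt_div_iff₀ (by linarith)).1 hl⟩

theorem log_le_log_ratio (hkn : k ≤ n) (hp : 0 < p) (hl : l < k) :
    log p ≤ log ((n - l) * p / (k - l)) :=
  log_le_log hp (by rw [le_div_iff₀ (sub_pos.2 hl)]; nlinarith)

theorem tendsto_log_ratio_atBot (hp : 0 < p) :
    Tendsto (fun l => log ((n - l) * p / (k - l))) atBot (𝓝 (log p)) := by
  have hkl : Tendsto (fun l => k - l) atBot atTop :=
    (tendsto_neg_atBot_atTop.atTop_add tendsto_const_nhds).congr fun l => neg_add_eq_sub l k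
  have hratio : Tendsto (fun l => (1 + (n - k) / (k - l)) * p) atBot (𝓝 p) := by
    simpa using ((tendsto_const_nhds.div_atTop hkl).const_add 1).mul_const p
  refine (continuousAt_log hp.ne').tendsto.comp (hratio.congr' ?_)
  filter_upwards [eventually_lt_atBot k] with l hl
  field_simp [(sub_pos.2 hl).ne']
  ring

theorem tendsto_log_ratio_nhdsLT (hkn : k < n) (hp : 0 < p) :
    Tendsto (fun l => log ((n - l) * p / (k - l))) (𝓝[<] k) atTop := by
  have hnum : Tendsto (fun l => (n - l) * p) (𝓝[<] k) (𝓝 ((n - k) * p)) :=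
    ((by fun_prop : Continuous fun l : ℝ => (n - l) * p).tendsto k).mono_left nhdsWithin_le_nhds
  have hden : Tendsto (fun l => k - l) (𝓝[<] k) (𝓝[>] 0) := by
    refine tendsto_nhdsWithin_iff.2
      ⟨?_, eventually_nhdsWithin_of_forall fun l hl => mem_Ioi.2 (sub_pos.2 hl)⟩
    simpa using ((continuous_sub_left k).tendsto k).mono_left nhdsWithin_le_nhds
  exact tendsto_log_atTop.comp <|
    (hnum.pos_mul_atTop (by nlinarith) (tendsto_inv_nhdsGT_zero.comp hden)).congr
      fun l => (div_eq_mul_inv _ _).symm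

theorem tendsto_inv_one_sub_div_mul {F : Filter ℝ} (hk : k ≠ 0) (ha : a ≠ 0) (hF : F ≤ 𝓝 (k / a))
    (hD : ∀ᶠ l in F, l ∈ domain k a) : Tendsto (fun l => (1 - l / k * a)⁻¹) F atTop := by
  refine tendsto_inv_nhdsGT_zero.comp <| tendsto_nhdsWithin_iff.2
    ⟨?_, hD.mono fun l hl => hl.2⟩
  have h0 : 1 - k / a / k * a = 0 := by field_simp; ring
  simpa [h0] using
    ((by fun_prop : Continuous fun l : ℝ => 1 - l / k * a).tendsto (k / a)).mono_left hF

theorem tendsto_g_atBot (hk : 0 < k) (hp : 0 < p) (ha : 0 ≤ a) :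
    Tendsto (g n k p a) atBot (𝓝 (log p)) := by
  have h1 : Tendsto (fun l => a / (1 - l / k * a)) atBot (𝓝 0) := by
    rcases ha.eq_or_lt with rfl | ha
    · simp
    · refine tendsto_const_nhds.div_atTop <|
        ((tendsto_neg_atBot_atTop.atTop_mul_const (div_pos ha hk)).atTop_add
          (tendsto_const_nhds (x := (1 : ℝ)))).congr fun l => by ring
  rw [← zero_add (log p)]
  exact h1.add (tendsto_log_ratio_atBot hp)

theorem tendsto_g_nhdsGT_div (hk : 0 < k) (hkn : k ≤ n) (hp : 0 < p) (ha : a < 0) :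
    Tendsto (g n k p a) (𝓝[>] (k / a)) atBot := by
  have hka : k / a < k := (div_neg_of_pos_of_neg hk ha).trans hk
  have h1 : Tendsto (fun l => a / (1 - l / k * a)) (𝓝[>] (k / a)) atBot :=
    ((tendsto_const_mul_atBot_of_neg ha).2 (tendsto_inv_one_sub_div_mul hk.ne' ha.ne
      nhdsWithin_le_nhds (eventually_mem_domain_nhdsGT_div hk ha))).congr
      fun l => (div_eq_mul_inv _ _).symm
  have h2 : ContinuousAt (fun l => log ((n - l) * p / (k - l))) (k / a) :=
    (((continuous_sub_left n).continuousAt.mul continuousAt_const).div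
      (continuous_sub_left k).continuousAt (sub_pos.2 hka).ne').log
      (div_pos (mul_pos (by linarith) hp) (sub_pos.2 hka)).ne'
  exact h1.atBot_add (h2.tendsto.mono_left nhdsWithin_le_nhds)

theorem tendsto_g_nhdsLT_self (hk : 0 < k) (hkn : k < n) (hp : 0 < p) (ha : a < 1) :
    Tendsto (g n k p a) (𝓝[<] k) atTop := by
  have h1 : ContinuousAt (fun l => a / (1 - l / k * a)) k :=
    continuousAt_const.div (by fun_prop) (by rw [div_self hk.ne']; linarith)
  exact (h1.tendsto.mono_left nhdsWithin_le_nhds).add_atTop (tendsto_log_ratio_nhdsLT hkn hp)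

theorem tendsto_g_nhdsLT_div (hk : 0 < k) (hkn : k ≤ n) (hp : 0 < p) (ha : 1 ≤ a) :
    Tendsto (g n k p a) (𝓝[<] (k / a)) atTop := by
  have h1 : Tendsto (fun l => a / (1 - l / k * a)) (𝓝[<] (k / a)) atTop :=
    ((tendsto_inv_one_sub_div_mul hk.ne' (by linarith) nhdsWithin_le_nhds
      (eventually_mem_domain_nhdsLT_div hk ha)).const_mul_atTop (by linarith)).congr
      fun l => (div_eq_mul_inv _ _).symm
  refine tendsto_atTop_add_right_of_le' _ (log p) h1 ?_
  filter_upwards [eventually_mem_domain_nhdsLT_div hk ha] with l hl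
  exact log_le_log_ratio hkn hp hl.1

theorem exists_g_neg (hk : 0 < k) (hkn : k ≤ n) (hp₀ : 0 < p) (hp₁ : p < 1) :
    ∃ l ∈ domain k a, g n k p a l < 0 := by
  rcases le_or_gt 0 a with ha | ha
  · exact ((eventually_mem_domain_atBot hk ha).and
      ((tendsto_g_atBot hk hp₀ ha).eventually_lt_const (log_neg hp₀ hp₁))).exists
  · exact ((eventually_mem_domain_nhdsGT_div hk ha).and
      ((tendsto_g_nhdsGT_div hk hkn hp₀ ha).eventually (eventually_lt_atBot 0))).exists

theorem exists_g_pos (hk : 0 < k) (hkn : k < n) (hp : 0 < p) :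
    ∃ l ∈ domain k a, 0 < g n k p a l := by
  rcases lt_or_ge a 1 with ha | ha
  · exact ((eventually_mem_domain_nhdsLT_self hk ha).and
      ((tendsto_g_nhdsLT_self hk hkn hp ha).eventually (eventually_gt_atTop 0))).exists
  · exact ((eventually_mem_domain_nhdsLT_div hk ha).and
      ((tendsto_g_nhdsLT_div hk hkn.le hp ha).eventually (eventually_gt_atTop 0))).exists

theorem existsUnique_g_eq_zero (hk : 0 < k) (hkn : k < n) (hp₀ : 0 < p) (hp₁ : p < 1) :
    ∃! l, l ∈ domain k a ∧ g n k p a l = 0 := by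
  obtain ⟨x, hx, hgx⟩ := exists_g_neg hk hkn.le hp₀ hp₁
  obtain ⟨y, hy, hgy⟩ := exists_g_pos hk hkn hp₀
  exact (strictMonoOn_g hk hkn hp₀.ne').existsUnique_eq_of_le_of_le convex_domain.ordConnected
    (continuousOn_g hk hkn.le hp₀.ne') hx hy hgx.le hgy.le

end LagrangeMultiplier

/-- Existence and uniqueness of the Lagrange multiplier in the likelihood ratio method:
on `D = {λ : λ < k, 1 - (λ/k)a > 0}`, the function
`g(λ) = a/(1 - (λ/k)a) + log((n-λ)p/(k-λ))` is differentiable with positive derivative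
`g'(λ) = a²/(k(1-(λ/k)a)²) + (n-k)/((n-λ)(k-λ))`, hence strictly increasing, and it has
exactly one zero on `D`. -/
theorem stmt_3 (n k : ℕ) (hk : 1 ≤ k) (hkn : k < n) (p : ℝ) (hp : p ∈ Set.Ioo (0 : ℝ) 1)
    (a : ℝ) (D : Set ℝ) (hD : D = {l : ℝ | l < (k : ℝ) ∧ 0 < 1 - (l / (k : ℝ)) * a})
    (g : ℝ → ℝ)
    (hg : ∀ l : ℝ, g l = a / (1 - (l / (k : ℝ)) * a) +
      Real.log (((n : ℝ) - l) * p / ((k : ℝ) - l))) :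
    (∀ l ∈ D, HasDerivAt g
        (a ^ 2 / ((k : ℝ) * (1 - (l / (k : ℝ)) * a) ^ 2) +
          ((n : ℝ) - (k : ℝ)) / (((n : ℝ) - l) * ((k : ℝ) - l))) l) ∧
    (∀ l ∈ D, 0 < a ^ 2 / ((k : ℝ) * (1 - (l / (k : ℝ)) * a) ^ 2) +
        ((n : ℝ) - (k : ℝ)) / (((n : ℝ) - l) * ((k : ℝ) - l))) ∧
    StrictMonoOn g D ∧
    (∃! l : ℝ, l ∈ D ∧ g l = 0) := by
  subst hD
  obtain rfl : g = LagrangeMultiplier.g n k p a := funext hg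
  have hk' : (0 : ℝ) < k := by exact_mod_cast hk
  have hkn' : (k : ℝ) < n := by exact_mod_cast hkn
  exact ⟨fun l hl => LagrangeMultiplier.hasDerivAt_g hk'.ne' hkn'.le hp.1.ne' hl,
    fun l hl => LagrangeMultiplier.g'_pos hk'.le hkn' hl,
    LagrangeMultiplier.strictMonoOn_g hk' hkn' hp.1.ne',
    LagrangeMultiplier.existsUnique_g_eq_zero hk' hkn' hp.1 hp.2⟩
end
end

section
/- Let 0 < x_1 < x_2 < ... < x_n be real numbers and 1 ≤ k < n. Define the censored likelihood L(γ, c) = [Π_{i=n−k+1}^n c γ x_i^{−γ−1}]·(1 − c x_{n−k}^{−γ})^{n−k} on the domain {(γ, c): γ > 0, 0 < c < x_{n−k}^γ}. Then L attains its maximum on this domain uniquely at γ̂ = [k^{−1} Σ_{i=1}^k log(x_{n−i+1}/x_{n−k})]^{−1} and ĉ = (k/n) x_{n−k}^{γ̂}. -/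
/-!
Write `T = x (n - k)` and reparametrize `c` by the tail fraction `p = c T^(-γ) ∈ (0, 1)`. The
log-likelihood then splits as `(k log γ - S γ) + (k log p + (n - k) log (1 - p))` plus a constant,
where `S = ∑ log (x_i / T)` over the top `k` observations. By `log t < t - 1` for `t ≠ 1`, the first
summand has its unique maximum at `γ = k / S`, the Hill estimator, and the second at `p = k / n`,
which corresponds to `c = (k / n) T^γ`.
-/

open Filter Real Set Topology

noncomputable section

/-- The censored likelihood of the Pareto-tail model, censored at the threshold `x (n-k)`. -/
def cenLik (x : ℕ → ℝ) (n k : ℕ) (γ c : ℝ) : ℝ :=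
  (∏ i ∈ Finset.Icc (n - k + 1) n, c * γ * x i ^ (-γ - 1)) *
    (1 - c * x (n - k) ^ (-γ)) ^ (n - k)

/-- The Hill estimator `γ̂` for an ordered sample. -/
def hillDet (x : ℕ → ℝ) (n k : ℕ) : ℝ :=
  ((k : ℝ)⁻¹ * ∑ i ∈ Finset.Icc 1 k, Real.log (x (n - i + 1) / x (n - k)))⁻¹

/-- The estimator `ĉ = (k/n) x_{n-k}^{γ̂}`. -/
def chatDet (x : ℕ → ℝ) (n k : ℕ) : ℝ := ((k : ℝ) / (n : ℝ)) * x (n - k) ^ hillDet x n k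

lemma mul_log_sub_mul_lt {a b y : ℝ} (ha : 0 < a) (hb : 0 < b) (hy : 0 < y)
    (hne : y ≠ a / b) :
    a * log y - b * y < a * log (a / b) - b * (a / b) := by
  have hy₀ : 0 < a / b := div_pos ha hb
  have hlog := log_lt_sub_one_of_pos (div_pos hy hy₀) (by rwa [ne_eq, div_eq_one_iff_eq hy₀.ne'])
  rw [log_div hy.ne' hy₀.ne'] at hlog
  have hlin : a * (y / (a / b) - 1) = b * y - b * (a / b) := by field_simp
  linarith [mul_lt_mul_of_pos_left hlog ha]

lemma mul_log_add_mul_log_one_sub_lt {a b q : ℝ} (ha : 0 < a) (hb : 0 < b) (hq₀ : 0 < q)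
    (hq₁ : q < 1) (hne : q ≠ a / (a + b)) :
    a * log q + b * log (1 - q) < a * log (a / (a + b)) + b * log (1 - a / (a + b)) := by
  have hp₀ : 0 < a / (a + b) := by positivity
  have hp₁ : 1 - a / (a + b) = b / (a + b) := by field_simp; ring
  have hp₁' : 0 < 1 - a / (a + b) := by rw [hp₁]; positivity
  have hlog_q := log_lt_sub_one_of_pos (div_pos hq₀ hp₀) (by rwa [ne_eq, div_eq_one_iff_eq hp₀.ne'])
  have hlog_one_sub := log_le_sub_one_of_pos (div_pos (sub_pos.2 hq₁) hp₁')
  rw [log_div hq₀.ne' hp₀.ne'] at hlog_q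
  rw [log_div (sub_pos.2 hq₁).ne' hp₁'.ne'] at hlog_one_sub
  -- the linear upper bounds of the two log-ratios cancel exactly
  have hlin : a * (q / (a / (a + b)) - 1) + b * ((1 - q) / (1 - a / (a + b)) - 1) = 0 := by
    rw [hp₁]; field_simp; ring
  linarith [mul_lt_mul_of_pos_left hlog_q ha, mul_le_mul_of_nonneg_left hlog_one_sub hb.le]

lemma add_lt_add_of_unique_max {α β : Type*} {f : α → ℝ} {g : β → ℝ} {s : Set α} {t : Set β}
    {a₀ : α} {b₀ : β} (hf : ∀ a ∈ s, a ≠ a₀ → f a < f a₀) (hg : ∀ b ∈ t, b ≠ b₀ → g b < g b₀)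
    {a : α} {b : β} (ha : a ∈ s) (hb : b ∈ t) (hne : (a, b) ≠ (a₀, b₀)) :
    f a + g b < f a₀ + g b₀ := by
  have hg' : g b ≤ g b₀ := by
    rcases eq_or_ne b b₀ with rfl | h
    · exact le_rfl
    · exact (hg b hb h).le
  rcases eq_or_ne a a₀ with rfl | h
  · exact add_lt_add_right (hg b hb fun h => hne (by rw [h])) _
  · exact add_lt_add_of_lt_of_le (hf a ha h) hg'

open Finset in
lemma log_prod_pareto_density {ι : Type*} (s : Finset ι) {x : ι → ℝ} {T γ c : ℝ}
    (hx : ∀ i ∈ s, 0 < x i) (hT : 0 < T) (hγ : 0 < γ) (hc : 0 < c) :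
    log (∏ i ∈ s, c * γ * x i ^ (-γ - 1)) =
      #s * log γ - γ * ∑ i ∈ s, log (x i / T) + #s * log (c * T ^ (-γ)) -
        ∑ i ∈ s, log (x i) := by
  rw [log_prod fun i hi => by have := hx i hi; positivity]
  have hterm : ∀ i ∈ s, log (c * γ * x i ^ (-γ - 1)) =
      log c + log γ - γ * (log (x i) - log T) - γ * log T - log (x i) := fun i hi => by
    rw [log_mul (by positivity) (rpow_pos_of_pos (hx i hi) _).ne', log_mul hc.ne' hγ.ne',
      log_rpow (hx i hi)]
    ring
  rw [sum_congr rfl hterm, log_mul hc.ne' (rpow_pos_of_pos hT _).ne', log_rpow hT,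
    sum_congr rfl fun i hi => log_div (hx i hi).ne' hT.ne']
  simp only [sum_sub_distrib, sum_add_distrib, sum_const, nsmul_eq_mul, ← mul_sum]
  ring

def tailLogSum (x : ℕ → ℝ) (n k : ℕ) : ℝ :=
  ∑ i ∈ Finset.Icc (n - k + 1) n, log (x i / x (n - k))

section Sample

variable {x : ℕ → ℝ} {n k : ℕ}

lemma card_tail (hkn : k ≤ n) : (Finset.Icc (n - k + 1) n).card = k := by
  rw [Nat.card_Icc]; omega

lemma threshold_pos (hkn : k < n) (hpos : ∀ i ∈ Finset.Icc 1 n, 0 < x i) : 0 < x (n - k) :=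
  hpos _ (Finset.mem_Icc.2 ⟨by omega, by omega⟩)

lemma threshold_lt_of_mem_tail (hkn : k < n) (hmono : StrictMonoOn x (Set.Icc 1 n)) {i : ℕ}
    (hi : i ∈ Finset.Icc (n - k + 1) n) : x (n - k) < x i := by
  rw [Finset.mem_Icc] at hi
  exact hmono (Set.mem_Icc.2 ⟨by omega, by omega⟩) (Set.mem_Icc.2 ⟨by omega, hi.2⟩) (by omega)

lemma tailLogSum_pos (hk : 1 ≤ k) (hkn : k < n) (hpos : ∀ i ∈ Finset.Icc 1 n, 0 < x i)
    (hmono : StrictMonoOn x (Set.Icc 1 n)) : 0 < tailLogSum x n k :=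
  Finset.sum_pos (fun i hi => log_pos <|
      (one_lt_div (threshold_pos hkn hpos)).2 (threshold_lt_of_mem_tail hkn hmono hi))
    (Finset.nonempty_Icc.2 (by omega))

lemma hillDet_eq_div (hkn : k ≤ n) : hillDet x n k = k / tailLogSum x n k := by
  have hreflect : ∑ i ∈ Finset.Icc 1 k, log (x (n - i + 1) / x (n - k)) = tailLogSum x n k :=
    Finset.sum_nbij' (fun i => n - i + 1) (fun j => n - j + 1)
      (fun i hi => by simp only [Finset.mem_Icc] at hi ⊢; omega)
      (fun j hj => by simp only [Finset.mem_Icc] at hj ⊢; omega)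
      (fun i hi => by simp only [Finset.mem_Icc] at hi; omega)
      (fun j hj => by simp only [Finset.mem_Icc] at hj; omega)
      (fun _ _ => rfl)
  rw [hillDet, hreflect, mul_inv_rev, inv_inv, div_eq_inv_mul]

lemma cenLik_pos (htail : ∀ i ∈ Finset.Icc (n - k + 1) n, 0 < x i)
    {γ c : ℝ} (hγ : 0 < γ) (hc : 0 < c) (hp : c * x (n - k) ^ (-γ) < 1) :
    0 < cenLik x n k γ c :=
  mul_pos (Finset.prod_pos fun i hi => by have := htail i hi; positivity)
    (pow_pos (sub_pos.2 hp) _)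

lemma log_cenLik (hkn : k ≤ n) (hT : 0 < x (n - k))
    (htail : ∀ i ∈ Finset.Icc (n - k + 1) n, 0 < x i)
    {γ c : ℝ} (hγ : 0 < γ) (hc : 0 < c) (hp : c * x (n - k) ^ (-γ) < 1) :
    log (cenLik x n k γ c) =
      (k * log γ - tailLogSum x n k * γ) +
        (k * log (c * x (n - k) ^ (-γ)) + (n - k : ℝ) * log (1 - c * x (n - k) ^ (-γ))) -
          ∑ i ∈ Finset.Icc (n - k + 1) n, log (x i) := by
  rw [cenLik, log_mul (Finset.prod_pos fun i hi => by have := htail i hi; positivity).ne'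
      (pow_pos (sub_pos.2 hp) _).ne', log_pow, log_prod_pareto_density _ htail hT hγ hc,
    card_tail hkn, Nat.cast_sub hkn, tailLogSum]
  ring

end Sample

lemma mul_rpow_neg_lt_one {T γ c : ℝ} (hT : 0 < T) (hcT : c < T ^ γ) : c * T ^ (-γ) < 1 := by
  rwa [rpow_neg hT.le, ← div_eq_mul_inv, div_lt_one (rpow_pos_of_pos hT γ)]

/-- The censored likelihood `L(γ,c)` on `{γ > 0, 0 < c < x_{n-k}^γ}` attains its maximum
uniquely at the Hill estimator `γ̂` and `ĉ = (k/n) x_{n-k}^{γ̂}`. -/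
theorem stmt_7 (n k : ℕ) (hk : 1 ≤ k) (hkn : k < n) (x : ℕ → ℝ)
    (hpos : ∀ i ∈ Finset.Icc 1 n, 0 < x i)
    (hmono : StrictMonoOn x (Set.Icc 1 n)) :
    (0 < hillDet x n k ∧ 0 < chatDet x n k ∧
      chatDet x n k < x (n - k) ^ hillDet x n k) ∧
    ∀ γ c : ℝ, 0 < γ → 0 < c → c < x (n - k) ^ γ →
      (γ, c) ≠ (hillDet x n k, chatDet x n k) →
      cenLik x n k γ c < cenLik x n k (hillDet x n k) (chatDet x n k) := by
  have hT := threshold_pos hkn hpos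
  have htail : ∀ i ∈ Finset.Icc (n - k + 1) n, 0 < x i := fun i hi =>
    hT.trans (threshold_lt_of_mem_tail hkn hmono hi)
  have hS := tailLogSum_pos hk hkn hpos hmono
  have hkR : (0 : ℝ) < k := by exact_mod_cast hk
  have hknR : (k : ℝ) < n := by exact_mod_cast hkn
  have hγhat : 0 < hillDet x n k := by rw [hillDet_eq_div hkn.le]; positivity
  have hchat : 0 < chatDet x n k :=
    mul_pos (div_pos hkR (hkR.trans hknR)) (rpow_pos_of_pos hT _)
  have hchat_lt : chatDet x n k < x (n - k) ^ hillDet x n k :=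
    mul_lt_of_lt_one_left (rpow_pos_of_pos hT _) ((div_lt_one (hkR.trans hknR)).2 hknR)
  have hphat : chatDet x n k * x (n - k) ^ (-hillDet x n k) = k / (k + (n - k : ℝ)) := by
    rw [chatDet, mul_assoc, ← rpow_add hT, add_neg_cancel, rpow_zero, mul_one, add_sub_cancel]
  refine ⟨⟨hγhat, hchat, hchat_lt⟩, fun γ c hγ hc hcT hne => ?_⟩
  have hp := mul_rpow_neg_lt_one hT hcT
  have hphat_lt := mul_rpow_neg_lt_one hT hchat_lt
  have hne' : (γ, c * x (n - k) ^ (-γ)) ≠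
      (hillDet x n k, chatDet x n k * x (n - k) ^ (-hillDet x n k)) := by
    intro heq
    obtain ⟨rfl, hpeq⟩ := Prod.mk.inj heq
    exact hne (Prod.ext rfl (mul_right_cancel₀ (rpow_pos_of_pos hT _).ne' hpeq))
  rw [← log_lt_log_iff (cenLik_pos htail hγ hc hp) (cenLik_pos htail hγhat hchat hphat_lt),
    log_cenLik hkn.le hT htail hγ hc hp, log_cenLik hkn.le hT htail hγhat hchat hphat_lt, hphat,
    hillDet_eq_div hkn.le]
  rw [hphat, hillDet_eq_div hkn.le] at hne'
  exact sub_lt_sub_right (add_lt_add_of_unique_max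
    (f := fun γ => k * log γ - tailLogSum x n k * γ)
    (g := fun p => k * log p + (n - k : ℝ) * log (1 - p))
    (fun _ hy hne => mul_log_sub_mul_lt hkR hS hy hne)
    (fun _ hq hne => mul_log_add_mul_log_one_sub_lt hkR (sub_pos.2 hknR) hq.1 hq.2 hne)
    (mem_Ioi.2 hγ) (mem_Ioo.2 ⟨by positivity, hp⟩) hne') _
end
end

section
/- Let 0 < x_1 < x_2 < ... < x_n be real numbers, 1 ≤ k < n, p ∈ (0,1) and x_p > 0. Let λ* be the unique λ < k with γ̄(λ) > 0 satisfying γ̄(λ) log x_p + log(p/c̄(λ)) = 0. Then the supremum of log L(γ, c) over the constraint set {(γ, c): γ > 0, c > 0, c x_{n−k}^{−γ} < 1, γ log x_p + log(p/c) = 0} is attained at (γ, c) = (γ̄(λ*), c̄(λ*)). -/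
open Filter Real Set Topology

noncomputable section

/-- The censored log-likelihood `log L(γ, c)`. -/
def logLDet (x : ℕ → ℝ) (n k : ℕ) (γ c : ℝ) : ℝ :=
  (∑ i ∈ Finset.Icc 1 k, Real.log (c * γ * x (n - i + 1) ^ (-γ - 1))) +
    ((n : ℝ) - (k : ℝ)) * Real.log (1 - c * x (n - k) ^ (-γ))

/-- The constrained maximizer `γ̄(λ)`. -/
def gambarDet (x : ℕ → ℝ) (n k : ℕ) (xp l : ℝ) : ℝ :=
  (k : ℝ) / ((∑ i ∈ Finset.Icc 1 k, (Real.log (x (n - i + 1)) - Real.log (x (n - k)))) +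
    l * Real.log (x (n - k)) - l * Real.log xp)

/-- The constrained maximizer `c̄(λ)`. -/
def cbarDet (x : ℕ → ℝ) (n k : ℕ) (xp l : ℝ) : ℝ :=
  x (n - k) ^ gambarDet x n k xp l * (((k : ℝ) - l) / ((n : ℝ) - l))

/-!
On the constraint curve `log c = log p + γ log x_p` one has `c x_{n-k}^{-γ} = r e^{(γ - γ̄) a}`
with `r = c̄ x_{n-k}^{-γ̄} = (k - λ) / (n - λ)` and `a = log x_p - log x_{n-k}`, so the
log-likelihood is a function of `γ` alone:
`k log γ - γ (S - k log x_p) + (n - k) log (1 - r e^{(γ - γ̄) a}) + const`, `S = ∑ log x_{n-i+1}`.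
Bound `log γ` and `t ↦ log (1 - r e^t)` by their tangent lines at `γ̄` and `0`. The linear terms
cancel because `k / γ̄ = S - k log x_{n-k} - λ a` and `(n - k) r = (k - λ) (1 - r)`, and what is
left is `(k - λ) (t + 1 - e^t) ≤ 0`.
-/

lemma log_le_log_add_sub_div {y y₀ : ℝ} (hy : 0 < y) (hy₀ : 0 < y₀) :
    log y ≤ log y₀ + (y - y₀) / y₀ := by
  have h := log_le_sub_one_of_pos (div_pos hy hy₀)
  rw [log_div hy.ne' hy₀.ne'] at h
  rw [sub_div, div_self hy₀.ne']
  linarith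

lemma mul_log_one_sub_mul_exp_add_le {m w r t : ℝ} (hm : 0 ≤ m) (hw : 0 ≤ w)
    (hr : r < 1) (hmw : m * r = w * (1 - r)) (ht : r * exp t < 1) :
    m * log (1 - r * exp t) + w * t ≤ m * log (1 - r) := by
  have hr' : 0 < 1 - r := by linarith
  have htangent := mul_le_mul_of_nonneg_left
    (log_le_log_add_sub_div (sub_pos.2 ht) hr') hm
  have hslope : m * ((1 - r * exp t - (1 - r)) / (1 - r)) = w * (1 - exp t) := by
    field_simp
    linear_combination (1 - exp t) * hmw
  have hexp := mul_le_mul_of_nonneg_left (add_one_le_exp t) hw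
  linarith

lemma mul_rpow_neg_eq_mul_exp {p q y γ γ₀ c c₀ : ℝ} (hp : 0 < p) (hy : 0 < y)
    (hc : 0 < c) (hc₀ : 0 < c₀) (h : γ * log q + log (p / c) = 0)
    (h₀ : γ₀ * log q + log (p / c₀) = 0) :
    c * y ^ (-γ) = c₀ * y ^ (-γ₀) * exp ((γ - γ₀) * (log q - log y)) := by
  rw [log_div hp.ne' hc.ne'] at h
  rw [log_div hp.ne' hc₀.ne'] at h₀
  rw [← exp_log hc, ← exp_log hc₀, rpow_def_of_pos hy, rpow_def_of_pos hy, ← exp_add,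
    ← exp_add, ← exp_add]
  congr 1
  linear_combination h₀ - h

section Likelihood

variable (x : ℕ → ℝ) (n k : ℕ)

lemma logLDet_eq (hkn : k ≤ n) (hpos : ∀ i ∈ Finset.Icc 1 n, 0 < x i) {γ c : ℝ}
    (hγ : 0 < γ) (hc : 0 < c) :
    logLDet x n k γ c = k * log c + k * log γ -
      (γ + 1) * ∑ i ∈ Finset.Icc 1 k, log (x (n - i + 1)) +
      (n - k) * log (1 - c * x (n - k) ^ (-γ)) := by
  have hterm : ∀ i ∈ Finset.Icc 1 k, log (c * γ * x (n - i + 1) ^ (-γ - 1)) =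
      (log c + log γ) + (-γ - 1) * log (x (n - i + 1)) := by
    intro i hi
    have hxi : 0 < x (n - i + 1) := hpos _ (by simp only [Finset.mem_Icc] at hi ⊢; omega)
    rw [log_mul (by positivity) (by positivity), log_mul hc.ne' hγ.ne', log_rpow hxi]
  rw [logLDet, Finset.sum_congr rfl hterm, Finset.sum_add_distrib, Finset.sum_const,
    ← Finset.mul_sum, Nat.card_Icc, Nat.add_sub_cancel, nsmul_eq_mul]
  ring

variable (xp lam : ℝ)

lemma natCast_div_gambarDet (hk : k ≠ 0) :
    k / gambarDet x n k xp lam = ∑ i ∈ Finset.Icc 1 k, log (x (n - i + 1)) -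
      k * log (x (n - k)) - lam * (log xp - log (x (n - k))) := by
  rw [gambarDet, div_div_cancel₀ (Nat.cast_ne_zero.2 hk), Finset.sum_sub_distrib,
    Finset.sum_const, Nat.card_Icc, Nat.add_sub_cancel, nsmul_eq_mul]
  ring

lemma cbarDet_mul_rpow_neg (hx : 0 < x (n - k)) :
    cbarDet x n k xp lam * x (n - k) ^ (-gambarDet x n k xp lam) = (k - lam) / (n - lam) := by
  rw [cbarDet, mul_right_comm, ← rpow_add hx, add_neg_cancel, rpow_zero, one_mul]

end Likelihood

theorem stmt_8_general (n k : ℕ) (hk : 1 ≤ k) (hkn : k < n) (x : ℕ → ℝ)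
    (hpos : ∀ i ∈ Finset.Icc 1 n, 0 < x i)
    (p : ℝ) (hp : p ∈ Set.Ioo (0 : ℝ) 1) (xp : ℝ)
    (lam : ℝ)
    (hlam : lam < (k : ℝ) ∧ 0 < gambarDet x n k xp lam ∧
      gambarDet x n k xp lam * Real.log xp + Real.log (p / cbarDet x n k xp lam) = 0) :
    (0 < gambarDet x n k xp lam ∧ 0 < cbarDet x n k xp lam ∧
      cbarDet x n k xp lam * x (n - k) ^ (-(gambarDet x n k xp lam)) < 1 ∧
      gambarDet x n k xp lam * Real.log xp +
        Real.log (p / cbarDet x n k xp lam) = 0) ∧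
    ∀ γ c : ℝ, 0 < γ → 0 < c → c * x (n - k) ^ (-γ) < 1 →
      γ * Real.log xp + Real.log (p / c) = 0 →
      logLDet x n k γ c ≤ logLDet x n k (gambarDet x n k xp lam) (cbarDet x n k xp lam) := by
  obtain ⟨hlk, hγ₀, hcon₀⟩ := hlam
  have hkn' : (k : ℝ) < n := by exact_mod_cast hkn
  have hx : 0 < x (n - k) := hpos _ (by simp only [Finset.mem_Icc]; omega)
  set γ₀ := gambarDet x n k xp lam
  set c₀ := cbarDet x n k xp lam
  set r := ((k : ℝ) - lam) / (n - lam)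
  have hnl : 0 < (n : ℝ) - lam := by linarith
  have hr : r < 1 := (div_lt_one hnl).2 (by linarith)
  have hu₀ : c₀ * x (n - k) ^ (-γ₀) = r := cbarDet_mul_rpow_neg x n k xp lam hx
  have hc₀ : 0 < c₀ := mul_pos (rpow_pos_of_pos hx _) (div_pos (by linarith) hnl)
  refine ⟨⟨hγ₀, hc₀, hu₀ ▸ hr, hcon₀⟩, fun γ c hγ hc hu hcon => ?_⟩
  have hu_eq := mul_rpow_neg_eq_mul_exp hp.1 hx hc hc₀ hcon hcon₀
  rw [hu₀] at hu_eq
  rw [logLDet_eq x n k hkn.le hpos hγ hc, logLDet_eq x n k hkn.le hpos hγ₀ hc₀, hu₀, hu_eq]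
  rw [hu_eq] at hu
  have hlog := mul_le_mul_of_nonneg_left (log_le_log_add_sub_div hγ hγ₀) (Nat.cast_nonneg k)
  have hslope := natCast_div_gambarDet x n k xp lam (by omega)
  have hbalance : ((n : ℝ) - k) * r = (k - lam) * (1 - r) := by
    simp only [r]
    field_simp [hnl.ne']
    ring
  have hcensored := mul_log_one_sub_mul_exp_add_le (sub_nonneg.2 hkn'.le) (sub_nonneg.2 hlk.le)
    hr hbalance hu
  rw [log_div hp.1.ne' hc.ne'] at hcon
  rw [log_div hp.1.ne' hc₀.ne'] at hcon₀
  linear_combination hlog + hcensored + (γ - γ₀) * hslope + (k : ℝ) * (hcon₀ - hcon)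

/-- If `λ*` is the unique `λ < k` with `γ̄(λ) > 0` solving
`γ̄(λ) log x_p + log(p/c̄(λ)) = 0`, then the supremum of the censored log-likelihood over the
constraint set `{γ > 0, c > 0, c x_{n-k}^{-γ} < 1, γ log x_p + log(p/c) = 0}` is attained
at `(γ̄(λ*), c̄(λ*))`. -/
theorem stmt_8 (n k : ℕ) (hk : 1 ≤ k) (hkn : k < n) (x : ℕ → ℝ)
    (hpos : ∀ i ∈ Finset.Icc 1 n, 0 < x i)
    (hmono : StrictMonoOn x (Set.Icc 1 n))
    (p : ℝ) (hp : p ∈ Set.Ioo (0 : ℝ) 1) (xp : ℝ) (hxp : 0 < xp)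
    (lam : ℝ)
    (hlam : lam < (k : ℝ) ∧ 0 < gambarDet x n k xp lam ∧
      gambarDet x n k xp lam * Real.log xp + Real.log (p / cbarDet x n k xp lam) = 0)
    (huniq : ∀ l : ℝ, l < (k : ℝ) → 0 < gambarDet x n k xp l →
      gambarDet x n k xp l * Real.log xp + Real.log (p / cbarDet x n k xp l) = 0 → l = lam) :
    (0 < gambarDet x n k xp lam ∧ 0 < cbarDet x n k xp lam ∧
      cbarDet x n k xp lam * x (n - k) ^ (-(gambarDet x n k xp lam)) < 1 ∧
      gambarDet x n k xp lam * Real.log xp +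
        Real.log (p / cbarDet x n k xp lam) = 0) ∧
    ∀ γ c : ℝ, 0 < γ → 0 < c → c * x (n - k) ^ (-γ) < 1 →
      γ * Real.log xp + Real.log (p / c) = 0 →
      logLDet x n k γ c ≤ logLDet x n k (gambarDet x n k xp lam) (cbarDet x n k xp lam) :=
  stmt_8_general n k hk hkn x hpos p hp xp lam hlam
end
end

section
/- Let x_1, ..., x_n > 0, T > 0, and δ_i = 1{x_i > T}. Let q_1, ..., q_n ≥ 0 with Σ_{i=1}^n q_i = 1, 0 < Σ_{i=1}^n q_i δ_i < 1, and Σ_{i=1}^n q_i δ_i log(x_i/T) > 0. Define ℓ(γ, c) = Σ_{i=1}^n q_i [δ_i log(c γ x_i^{−γ−1}) + (1 − δ_i) log(1 − c T^{−γ})] for γ > 0 and 0 < c < T^γ. Then ℓ attains its maximum on this domain uniquely at γ̂(q) = Σ_{i=1}^n q_i δ_i / Σ_{i=1}^n q_i δ_i log(x_i/T) and ĉ(q) = T^{γ̂(q)} · Σ_{i=1}^n q_i δ_i. -/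
open Filter Real Set Topology

noncomputable section

/-- The `q`-weighted censored log-likelihood of the Pareto-tail model with threshold `T`:
observations above `T` contribute `log(c γ x^{-γ-1})`, the others `log(1 - c T^{-γ})`. -/
def wLogLik (x : ℕ → ℝ) (T : ℝ) (n : ℕ) (q : ℕ → ℝ) (γ c : ℝ) : ℝ :=
  ∑ i ∈ Finset.Icc 1 n, q i *
    ((if T < x i then (1 : ℝ) else 0) * Real.log (c * γ * x i ^ (-γ - 1)) +
      (1 - if T < x i then (1 : ℝ) else 0) * Real.log (1 - c * T ^ (-γ)))

lemma lin_log_le {a b : ℝ} (ha : 0 < a) (hb : 0 < b) :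
    a * Real.log b ≤ a * Real.log a + b - a := by
  have h := Real.log_le_sub_one_of_pos (show (0:ℝ) < b / a by positivity)
  rw [Real.log_div hb.ne' ha.ne'] at h
  have h2 : a * (Real.log b - Real.log a) ≤ a * (b / a - 1) :=
    mul_le_mul_of_nonneg_left h ha.le
  have h3 : a * (b / a - 1) = b - a := by field_simp
  nlinarith

lemma lin_log_lt {a b : ℝ} (ha : 0 < a) (hb : 0 < b) (hne : b ≠ a) :
    a * Real.log b < a * Real.log a + b - a := by
  have hba : b / a ≠ 1 := by
    intro h
    apply hne
    field_simp at h
    exact h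
  have h := Real.log_lt_sub_one_of_pos (show (0:ℝ) < b / a by positivity) hba
  rw [Real.log_div hb.ne' ha.ne'] at h
  have h2 : a * (Real.log b - Real.log a) < a * (b / a - 1) :=
    mul_lt_mul_of_pos_left h ha
  have h3 : a * (b / a - 1) = b - a := by field_simp
  nlinarith

lemma wLogLik_expand (x : ℕ → ℝ) (T : ℝ) (n : ℕ) (q : ℕ → ℝ)
    (hx : ∀ i ∈ Finset.Icc 1 n, 0 < x i)
    {γ c : ℝ} (hγ : 0 < γ) (hc : 0 < c) :
    wLogLik x T n q γ c
      = (Real.log c + Real.log γ) *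
          (∑ i ∈ Finset.Icc 1 n, q i * (if T < x i then (1:ℝ) else 0))
        + (-γ - 1) *
          (∑ i ∈ Finset.Icc 1 n, q i * (if T < x i then (1:ℝ) else 0) * Real.log (x i))
        + ((∑ i ∈ Finset.Icc 1 n, q i)
            - (∑ i ∈ Finset.Icc 1 n, q i * (if T < x i then (1:ℝ) else 0)))
            * Real.log (1 - c * T ^ (-γ)) := by
  unfold wLogLik
  have key : ∀ i ∈ Finset.Icc 1 n,
      q i * ((if T < x i then (1:ℝ) else 0) * Real.log (c * γ * x i ^ (-γ - 1)) +
        (1 - if T < x i then (1:ℝ) else 0) * Real.log (1 - c * T ^ (-γ)))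
      = (Real.log c + Real.log γ) * (q i * (if T < x i then (1:ℝ) else 0))
        + (-γ - 1) * (q i * (if T < x i then (1:ℝ) else 0) * Real.log (x i))
        + (q i - q i * (if T < x i then (1:ℝ) else 0)) * Real.log (1 - c * T ^ (-γ)) := by
    intro i hi
    have hxi := hx i hi
    have hlog : Real.log (c * γ * x i ^ (-γ - 1))
        = Real.log c + Real.log γ + (-γ - 1) * Real.log (x i) := by
      rw [Real.log_mul (by positivity) (by positivity), Real.log_mul hc.ne' hγ.ne',
        Real.log_rpow hxi]
    rw [hlog]; ring
  rw [Finset.sum_congr rfl key, Finset.sum_add_distrib, Finset.sum_add_distrib,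
    ← Finset.mul_sum, ← Finset.mul_sum, ← Finset.sum_mul, Finset.sum_sub_distrib]

/-- The weighted (tilted) maximum likelihood estimators: `ℓ(γ, c)` attains its maximum on
`{γ > 0, 0 < c < T^γ}` uniquely at `γ̂(q) = Σ q_i δ_i / Σ q_i δ_i log(x_i/T)` and
`ĉ(q) = T^{γ̂(q)} Σ q_i δ_i`. -/
theorem stmt_9 (n : ℕ) (x : ℕ → ℝ) (hx : ∀ i ∈ Finset.Icc 1 n, 0 < x i)
    (T : ℝ) (hT : 0 < T) (q : ℕ → ℝ)
    (hq0 : ∀ i ∈ Finset.Icc 1 n, 0 ≤ q i)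
    (hq1 : ∑ i ∈ Finset.Icc 1 n, q i = 1)
    (hS0 : 0 < ∑ i ∈ Finset.Icc 1 n, q i * (if T < x i then (1 : ℝ) else 0))
    (hS1 : (∑ i ∈ Finset.Icc 1 n, q i * (if T < x i then (1 : ℝ) else 0)) < 1)
    (hSlog : 0 < ∑ i ∈ Finset.Icc 1 n,
      q i * (if T < x i then (1 : ℝ) else 0) * Real.log (x i / T))
    (γq cq : ℝ)
    (hγq : γq = (∑ i ∈ Finset.Icc 1 n, q i * (if T < x i then (1 : ℝ) else 0)) /
      ∑ i ∈ Finset.Icc 1 n, q i * (if T < x i then (1 : ℝ) else 0) * Real.log (x i / T))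
    (hcq : cq = T ^ γq * ∑ i ∈ Finset.Icc 1 n, q i * (if T < x i then (1 : ℝ) else 0)) :
    (0 < γq ∧ 0 < cq ∧ cq < T ^ γq) ∧
    ∀ γ c : ℝ, 0 < γ → 0 < c → c < T ^ γ → (γ, c) ≠ (γq, cq) →
      wLogLik x T n q γ c < wLogLik x T n q γq cq := by
  set S := ∑ i ∈ Finset.Icc 1 n, q i * (if T < x i then (1 : ℝ) else 0) with hSdef
  set L := ∑ i ∈ Finset.Icc 1 n,
      q i * (if T < x i then (1 : ℝ) else 0) * Real.log (x i / T) with hLdef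
  set A := ∑ i ∈ Finset.Icc 1 n,
      q i * (if T < x i then (1 : ℝ) else 0) * Real.log (x i) with hAdef
  have hA : A = L + Real.log T * S := by
    rw [hAdef, hLdef, hSdef, Finset.mul_sum, ← Finset.sum_add_distrib]
    refine Finset.sum_congr rfl fun i hi => ?_
    rw [Real.log_div (hx i hi).ne' hT.ne']
    ring
  have hγq0 : 0 < γq := by rw [hγq]; positivity
  have hγqL : γq * L = S := by rw [hγq]; field_simp
  have hTγq : 0 < T ^ γq := Real.rpow_pos_of_pos hT γq
  have hcq0 : 0 < cq := by rw [hcq]; positivity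
  have hcqlt : cq < T ^ γq := by
    rw [hcq]
    nlinarith
  refine ⟨⟨hγq0, hcq0, hcqlt⟩, ?_⟩
  intro γ c hγ hc hclt hne
  have hTγ : 0 < T ^ γ := Real.rpow_pos_of_pos hT γ
  have hTnγ : 0 < T ^ (-γ) := Real.rpow_pos_of_pos hT (-γ)
  have hTnγq : 0 < T ^ (-γq) := Real.rpow_pos_of_pos hT (-γq)
  have hTT : T ^ γ * T ^ (-γ) = 1 := by
    rw [← Real.rpow_add hT]; simp
  have hTTq : T ^ γq * T ^ (-γq) = 1 := by
    rw [← Real.rpow_add hT]; simp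
  set u := c * T ^ (-γ) with hudef
  have hu0 : 0 < u := by positivity
  have hu1 : u < 1 := by
    have := mul_lt_mul_of_pos_right hclt hTnγ
    rwa [hTT] at this
  have huq : cq * T ^ (-γq) = S := by
    rw [hcq]
    calc T ^ γq * S * T ^ (-γq) = T ^ γq * T ^ (-γq) * S := by ring
      _ = S := by rw [hTTq]; ring
  have hlogc : Real.log c = Real.log u + γ * Real.log T := by
    have : Real.log u = Real.log c + (-γ) * Real.log T := by
      rw [hudef, Real.log_mul hc.ne' hTnγ.ne', Real.log_rpow hT]
    linarith
  have hlogcq : Real.log cq = Real.log S + γq * Real.log T := by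
    rw [hcq, Real.log_mul hTγq.ne' hS0.ne', Real.log_rpow hT]
    ring
  have e1 : wLogLik x T n q γ c
      = (S * Real.log u + (1 - S) * Real.log (1 - u))
        + (S * Real.log γ - γ * L) - L - S * Real.log T := by
    rw [wLogLik_expand x T n q hx hγ hc, hq1, ← hSdef, ← hAdef, hlogc, hA, ← hudef]
    ring
  have e2 : wLogLik x T n q γq cq
      = (S * Real.log S + (1 - S) * Real.log (1 - S))
        + (S * Real.log γq - γq * L) - L - S * Real.log T := by
    rw [wLogLik_expand x T n q hx hγq0 hcq0, hq1, ← hSdef, ← hAdef, hlogcq, hA, huq]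
    ring
  rw [e1, e2]
  have hL0 : 0 < L := hSlog
  have hS1' : (0:ℝ) < 1 - S := by linarith
  have hu1' : (0:ℝ) < 1 - u := by linarith
  -- Gibbs inequality pieces
  have g1 : S * Real.log u ≤ S * Real.log S + u - S := lin_log_le hS0 hu0
  have g2 : (1 - S) * Real.log (1 - u) ≤ (1 - S) * Real.log (1 - S) + (1 - u) - (1 - S) :=
    lin_log_le hS1' hu1'
  -- γ part
  have m1 : S * Real.log γ ≤ S * Real.log γq + L * (γ - γq) := by
    have h := lin_log_le hγq0 hγ
    calc S * Real.log γ = L * (γq * Real.log γ) := by rw [← hγqL]; ring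
      _ ≤ L * (γq * Real.log γq + γ - γq) := by
          apply mul_le_mul_of_nonneg_left h hL0.le
      _ = S * Real.log γq + L * (γ - γq) := by rw [← hγqL]; ring
  rcases eq_or_ne γ γq with hγeq | hγne
  · subst hγeq
    have hcne : c ≠ cq := by
      intro h
      exact hne (by rw [h])
    have huS : u ≠ S := by
      intro h
      apply hcne
      have : c * T ^ (-γ) = cq * T ^ (-γ) := by rw [← hudef, h, huq]
      exact mul_right_cancel₀ hTnγ.ne' this
    have g1' : S * Real.log u < S * Real.log S + u - S := lin_log_lt hS0 hu0 huS
    linarith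
  · have m1' : S * Real.log γ < S * Real.log γq + L * (γ - γq) := by
      have h := lin_log_lt hγq0 hγ hγne
      calc S * Real.log γ = L * (γq * Real.log γ) := by rw [← hγqL]; ring
        _ < L * (γq * Real.log γq + γ - γq) := by
            apply mul_lt_mul_of_pos_left h hL0
        _ = S * Real.log γq + L * (γ - γq) := by rw [← hγqL]; ring
    linarith
end
end

section
/- Let U : (0, ∞) → (0, ∞), let γ > 0 and ρ < 0, and let A : (0, ∞) → ℝ satisfy A(t) → 0 as t → ∞ and A(t) ≠ 0 for all sufficiently large t. Then the following are equivalent: (i) for every x > 0, lim_{t→∞} (U(tx)/U(t) − x^{1/γ})/A(t) = x^{1/γ}(x^ρ − 1)/ρ; (ii) for every x > 0, lim_{t→∞} (log U(tx) − log U(t) − γ^{−1} log x)/A(t) = (x^ρ − 1)/ρ. -/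
open Filter Real Set Topology

/-!
The two conditions are related by the substitution `R t = U(tx)/U(t)`, `c = x^{1/γ}`: one is
`(R t - c)/A t → c ℓ`, the other `(log R t - log c)/A t → ℓ`. Since `R t - c = O(A t) → 0`, a
first-order expansion of `log` at `c` (derivative `c⁻¹`), resp. of `exp` at `log c` (derivative
`c`), turns either rate into the other.
-/

theorem HasDerivAt.tendsto_comp_sub_div {α 𝕜 : Type*} [NontriviallyNormedField 𝕜] {l : Filter α}
    {φ : 𝕜 → 𝕜} {d c m : 𝕜} {u A : α → 𝕜} (hφ : HasDerivAt φ d c)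
    (hA : Tendsto A l (𝓝 0)) (hA' : ∀ᶠ t in l, A t ≠ 0)
    (hu : Tendsto (fun t => (u t - c) / A t) l (𝓝 m)) :
    Tendsto (fun t => (φ (u t) - φ c) / A t) l (𝓝 (d * m)) := by
  have hbigO : (fun t => u t - c) =O[l] A :=
    Asymptotics.isBigO_of_div_tendsto_nhds (hA'.mono fun t ht h => absurd h ht) m hu
  have hu_tendsto : Tendsto u l (𝓝 c) := by
    simpa using (hbigO.trans_tendsto hA).add_const c
  have hremainder : (fun t => φ (u t) - φ c - (u t - c) * d) =o[l] A :=
    ((hφ.isLittleO.comp_tendsto hu_tendsto).trans_isBigO hbigO).congr_left fun t => by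
      simp [smul_eq_mul]
  have hlinear : Tendsto (fun t => (u t - c) / A t * d) l (𝓝 (d * m)) := by
    simpa [mul_comm] using hu.mul_const d
  simpa using (hremainder.tendsto_div_nhds_zero.add hlinear).congr' <|
    hA'.mono fun t ht => by field_simp; ring

theorem tendsto_sub_div_iff_tendsto_log_sub_div {α : Type*} {l : Filter α} {R A : α → ℝ}
    {c ℓ : ℝ} (hc : 0 < c) (hR : ∀ᶠ t in l, 0 < R t)
    (hA : Tendsto A l (𝓝 0)) (hA' : ∀ᶠ t in l, A t ≠ 0) :
    Tendsto (fun t => (R t - c) / A t) l (𝓝 (c * ℓ)) ↔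
      Tendsto (fun t => (log (R t) - log c) / A t) l (𝓝 ℓ) := by
  constructor
  · intro h
    simpa [hc.ne'] using (hasDerivAt_log hc.ne').tendsto_comp_sub_div hA hA' h
  · intro h
    have := (hasDerivAt_exp (log c)).tendsto_comp_sub_div hA hA' h
    rw [exp_log hc] at this
    exact this.congr' <| hR.mono fun t ht => by rw [exp_log ht]

theorem stmt_11_general (U : ℝ → ℝ) (hU : ∀ t : ℝ, 0 < t → 0 < U t)
    (γ ρ : ℝ)
    (A : ℝ → ℝ) (hA : Tendsto A atTop (𝓝 0)) (hA' : ∀ᶠ t in atTop, A t ≠ 0) :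
    (∀ x : ℝ, 0 < x → Tendsto
        (fun t => (U (t * x) / U t - x ^ (1 / γ)) / A t) atTop
        (𝓝 (x ^ (1 / γ) * (x ^ ρ - 1) / ρ))) ↔
    (∀ x : ℝ, 0 < x → Tendsto
        (fun t => (Real.log (U (t * x)) - Real.log (U t) - γ⁻¹ * Real.log x) / A t) atTop
        (𝓝 ((x ^ ρ - 1) / ρ))) := by
  refine forall₂_congr fun x hx => ?_
  have hUpos : ∀ᶠ t in atTop, 0 < U (t * x) ∧ 0 < U t :=
    (eventually_gt_atTop 0).mono fun t ht => ⟨hU _ (mul_pos ht hx), hU t ht⟩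
  rw [mul_div_assoc, tendsto_sub_div_iff_tendsto_log_sub_div (rpow_pos_of_pos hx _)
    (hUpos.mono fun t ht => div_pos ht.1 ht.2) hA hA']
  refine tendsto_congr' (hUpos.mono fun t ht => ?_)
  simp only [log_div ht.1.ne' ht.2.ne', log_rpow hx, one_div]

/-- Equivalence of the second-order regular variation condition for the tail quantile
function `U` and its logarithmic form: for `γ > 0`, `ρ < 0` and `A(t) → 0` eventually
nonzero, `(U(tx)/U(t) - x^{1/γ})/A(t) → x^{1/γ}(x^ρ-1)/ρ` for all `x > 0` if and only if
`(log U(tx) - log U(t) - γ⁻¹ log x)/A(t) → (x^ρ-1)/ρ` for all `x > 0`. -/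
theorem stmt_11 (U : ℝ → ℝ) (hU : ∀ t : ℝ, 0 < t → 0 < U t)
    (γ ρ : ℝ) (hγ : 0 < γ) (hρ : ρ < 0)
    (A : ℝ → ℝ) (hA : Tendsto A atTop (𝓝 0)) (hA' : ∀ᶠ t in atTop, A t ≠ 0) :
    (∀ x : ℝ, 0 < x → Tendsto
        (fun t => (U (t * x) / U t - x ^ (1 / γ)) / A t) atTop
        (𝓝 (x ^ (1 / γ) * (x ^ ρ - 1) / ρ))) ↔
    (∀ x : ℝ, 0 < x → Tendsto
        (fun t => (Real.log (U (t * x)) - Real.log (U t) - γ⁻¹ * Real.log x) / A t) atTop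
        (𝓝 ((x ^ ρ - 1) / ρ))) :=
  stmt_11_general U hU γ ρ A hA hA'
end
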